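/- The Unanimous Greedy Algorithm achieves a 1/2-approximation: on instances with unit project costs and unanimous districts (sw_i(x_j) ∈ {0, |d_i|}), the greedy algorithm that repeatedly selects a maximum-coverage project, breaking ties by maximum total welfare, returns an outcome W that is district-fair, budget-feasible, and satisfies sw(W) ≥ sw(W*)/2 for every district-fair budget-feasible outcome W*. -/

import Mathlib

/-!
With unit costs and unanimous districts, the cheapest fractional completion of an outcome `W`
buys whole missing approvers, so `coverTot` is, up to a constant, the truncated count
`∑ i, min (m i) #(W ∩ A i)` with `A i` the approvers of district `i` and
`m i = min (bd i) #(A i)`. Greedy thus reaches full coverage `D = ∑ i, m i ≤ b`, which is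
fairness.

For the welfare bound it suffices, by the layer-cake formula, to show for every threshold `τ` that
a fair `W*` with `#W* ≤ b` has at most twice as many projects of welfare `> τ` as the greedy
outcome. If one of them, `y`, is never picked, then every low pick (welfare `≤ τ`) strictly
increases coverage, for otherwise `y` would tie with it and win the tie-break. Let `t` be the
first low pick of gain exactly one. Low picks before `t` gain at least two; at `t` every missing
project of `W*` gains at most one and the high ones gain nothing, so the remaining deficit, and
with it the number of low picks from `t` on, is at most the number of low projects of `W*`
missing at `t`. Comparing the total gain with `D ≤ b` gives the factor two.
-/

open Finset

/-- Fractional feasibility for a single district (unit costs, natural-valued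
welfare). -/
def FracFeasible {P : Type*} [Fintype P] (sw : P → ℕ) (f : ℕ)
    (W : Finset P) (p : P → ℝ) : Prop :=
  (∀ x, 0 ≤ p x ∧ p x ≤ 1) ∧ (∀ x ∈ W, p x = 0) ∧
    (f : ℝ) ≤ (∑ x ∈ W, (sw x : ℝ)) + ∑ x, p x * (sw x : ℝ)

/-- Residual budget requirement of a district (unit costs: cost of `p` is
`∑ x, p x`). -/
noncomputable def resid {P : Type*} [Fintype P] (sw : P → ℕ) (f : ℕ)
    (W : Finset P) : ℝ :=
  sInf ((fun p : P → ℝ => ∑ x, p x) '' {p | FracFeasible sw f W p})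

noncomputable def coverTot {P : Type*} [Fintype P] {k : ℕ}
    (sw : Fin k → P → ℕ) (f bd : Fin k → ℕ) (W : Finset P) : ℝ :=
  ∑ i, ((bd i : ℝ) - resid (sw i) (f i) W)

theorem sum_eq_sum_range_card_filter_lt {α : Type*} (X : Finset α) (f : α → ℕ) {T : ℕ}
    (hT : ∀ y ∈ X, f y ≤ T) :
    ∑ y ∈ X, f y = ∑ τ ∈ range T, #{y ∈ X | τ < f y} := by
  simp_rw [card_filter]
  rw [sum_comm]
  refine sum_congr rfl fun y hy => ?_
  have hrange : {τ ∈ range T | τ < f y} = range (f y) := by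
    ext τ
    simp only [mem_filter, mem_range]
    have := hT y hy
    omega
  rw [← card_filter, hrange, card_range]

section Greedy

variable {P : Type*} [DecidableEq P]

structure IsGreedyRun (g : Finset P → ℕ) (s : P → ℕ) (b : ℕ) (W : ℕ → Finset P)
    (x : ℕ → P) : Prop where
  zero : W 0 = ∅
  succ : ∀ j < b, W (j + 1) = insert (x j) (W j)
  notMem : ∀ j < b, x j ∉ W j
  max_gain : ∀ j < b, ∀ y ∉ W j, g (insert y (W j)) ≤ g (insert (x j) (W j))
  tie : ∀ j < b, ∀ y ∉ W j, g (insert y (W j)) = g (insert (x j) (W j)) → s y ≤ s (x j)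

/-- The marginal gains of the elements of `C` missing from any `S` make up the deficit
`D - g S`; for submodular `g` this amounts to `D ≤ g (S ∪ C)`. -/
def Covers (g : Finset P → ℕ) (D : ℕ) (C : Finset P) : Prop :=
  ∀ S, D ≤ g S + ∑ y ∈ C \ S, (g (insert y S) - g S)

variable {g : Finset P → ℕ} {s : P → ℕ} {b D : ℕ} {W : ℕ → Finset P} {x : ℕ → P}
  {C : Finset P}

theorem Covers.exists_lt (hC : Covers g D C) {S : Finset P} (hS : g S < D) :
    ∃ y ∉ S, g S < g (insert y S) := by
  by_contra! h
  have hD := hC S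
  rw [sum_eq_zero fun y hy => Nat.sub_eq_zero_of_le (h y (mem_sdiff.1 hy).2)] at hD
  omega

theorem Covers.sum {ι : Type*} (t : Finset ι) {g : ι → Finset P → ℕ} {D : ι → ℕ}
    (hg : ∀ i ∈ t, Monotone (g i)) (h : ∀ i ∈ t, Covers (g i) (D i) C) :
    Covers (fun X => ∑ i ∈ t, g i X) (∑ i ∈ t, D i) C := by
  intro S
  have hgain : ∀ y, ∑ i ∈ t, g i (insert y S) - ∑ i ∈ t, g i S
      = ∑ i ∈ t, (g i (insert y S) - g i S) := fun y =>
    (sum_tsub_distrib t fun i hi => hg i hi (subset_insert y S)).symm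
  simp only [hgain]
  rw [sum_comm, ← sum_add_distrib]
  exact sum_le_sum fun i hi => h i hi S

theorem covers_min_card {A : Finset P} {m : ℕ} (h : m ≤ #(C ∩ A)) :
    Covers (fun X => min m #(X ∩ A)) m C := by
  intro S
  by_cases hS : m ≤ #(S ∩ A)
  · simp [hS]
  have hsplit : #(C ∩ A) ≤ #((C \ S) ∩ A) + #(S ∩ A) := by
    refine (card_le_card fun y hy => ?_).trans (card_union_le _ _)
    by_cases hyS : y ∈ S <;> simp_all
  have hgain : #((C \ S) ∩ A)
      ≤ ∑ y ∈ C \ S, (min m #(insert y S ∩ A) - min m #(S ∩ A)) := calc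
    #((C \ S) ∩ A) = ∑ y ∈ (C \ S) ∩ A, 1 := card_eq_sum_ones _
    _ = ∑ y ∈ (C \ S) ∩ A, (min m #(insert y S ∩ A) - min m #(S ∩ A)) := by
      refine sum_congr rfl fun y hy => ?_
      obtain ⟨⟨-, hyS⟩, hyA⟩ : (y ∈ C ∧ y ∉ S) ∧ y ∈ A := by simpa using hy
      rw [insert_inter_of_mem hyA, card_insert_of_notMem fun h => hyS (mem_inter.1 h).1]
      omega
    _ ≤ _ := sum_le_sum_of_subset inter_subset_left
  dsimp only
  omega

namespace IsGreedyRun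

variable (run : IsGreedyRun g s b W x)
include run

theorem subset_of_le {j k : ℕ} (hjk : j ≤ k) (hk : k ≤ b) : W j ⊆ W k := by
  induction k, hjk using Nat.le_induction with
  | base => exact Subset.rfl
  | succ k _ ih =>
    rw [run.succ k (by omega)]
    exact (ih (by omega)).trans (subset_insert _ _)

theorem image_range {n : ℕ} (hn : n ≤ b) : (range n).image x = W n := by
  induction n with
  | zero => simp [run.zero]
  | succ n ih => rw [range_add_one, image_insert, ih (by omega), run.succ n (by omega)]

theorem injOn : Set.InjOn x (range b) := by
  intro i hi j hj hij
  simp only [coe_range, Set.mem_Iio] at hi hj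
  by_contra hne
  wlog hlt : i < j generalizing i j
  · exact this hij.symm hj hi (Ne.symm hne) (by omega)
  refine run.notMem j hj (hij ▸ run.subset_of_le hlt hj.le ?_)
  rw [run.succ i hi]
  exact mem_insert_self _ _

theorem card_filter_eq (p : P → Prop) [DecidablePred p] :
    #{y ∈ W b | p y} = #{j ∈ range b | p (x j)} := by
  rw [← run.image_range le_rfl, filter_image,
    card_image_of_injOn (run.injOn.mono (filter_subset _ _))]

theorem card_le : #(W b) ≤ b := by
  rw [← run.image_range le_rfl]
  exact card_image_le.trans (card_range b).le

theorem le_add_card_filter (hC : Covers g D C) {j τ : ℕ} (hj : j < b) (hxτ : s (x j) ≤ τ)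
    (hunit : g (W (j + 1)) ≤ g (W j) + 1) :
    D ≤ g (W j) + #{y ∈ C \ W j | s y ≤ τ} := by
  refine (hC (W j)).trans (Nat.add_le_add_left ?_ _)
  rw [card_filter]
  refine sum_le_sum fun y hy => ?_
  have hyW : y ∉ W j := (mem_sdiff.1 hy).2
  have hmax := run.max_gain j hj y hyW
  rw [← run.succ j hj] at hmax
  split_ifs with hyτ
  · omega
  · have hnot : ¬ g (W j) < g (insert y (W j)) := fun hlt =>
      hyτ ((run.tie j hj y hyW (by rw [← run.succ j hj]; omega)).trans hxτ)
    omega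

variable (hg : Monotone g)
include hg

theorem le_apply_of_covers (hC : Covers g D C) (hDb : D ≤ b) : D ≤ g (W b) := by
  suffices h : ∀ n ≤ b, min D n ≤ g (W n) by simpa [hDb] using h b le_rfl
  intro n hn
  induction n with
  | zero => simp
  | succ n ih =>
    have ih := ih (by omega)
    have hmono := hg (run.subset_of_le (Nat.le_add_right n 1) hn)
    by_cases hlt : g (W n) < D
    · obtain ⟨y, hy, hgain⟩ := hC.exists_lt hlt
      have hmax := run.max_gain n (by omega) y hy
      rw [← run.succ n (by omega)] at hmax
      omega
    · omega

theorem add_mul_card_filter_le (p : ℕ → Prop) [DecidablePred p] {k a c : ℕ} (hac : a ≤ c)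
    (hc : c ≤ b) (hp : ∀ j ∈ Ico a c, p j → g (W j) + k ≤ g (W (j + 1))) :
    g (W a) + k * #{j ∈ Ico a c | p j} ≤ g (W c) := by
  induction c, hac using Nat.le_induction with
  | base => simp
  | succ c hac ih =>
    have ih := ih (by omega) fun j hj => hp j (Ico_subset_Ico_right c.le_succ hj)
    have hmono := hg (run.subset_of_le (Nat.le_add_right c 1) hc)
    rw [Nat.Ico_succ_right_eq_insert_Ico hac, filter_insert]
    split_ifs with hpc
    · have hstep := hp c (by simp; omega) hpc
      rw [card_insert_of_notMem (by simp), mul_add_one]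
      omega
    · omega

/-- A pick below the value of a never-picked element must have strictly increased `g`:
otherwise that element would have tied with it and won the tie-break. -/
theorem apply_lt_succ {j : ℕ} {y : P} (hj : j < b) (hy : y ∉ W j) (hs : s (x j) < s y) :
    g (W j) < g (W (j + 1)) := by
  rw [run.succ j hj]
  by_contra! hle
  have heq : g (insert y (W j)) = g (insert (x j) (W j)) :=
    le_antisymm (run.max_gain j hj y hy) (hle.trans (hg (subset_insert _ _)))
  exact (run.tie j hj y hy heq).not_gt hs

variable (hgD : ∀ X, g X ≤ D) (hDb : D ≤ b) (hCb : #C ≤ b)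
include hgD hDb hCb

theorem card_filter_lt_le_of_split {τ t : ℕ} (ht : t ≤ b)
    (hbefore : ∀ j ∈ Ico 0 t, s (x j) ≤ τ → g (W j) + 2 ≤ g (W (j + 1)))
    (hafter : ∀ j ∈ Ico t b, s (x j) ≤ τ → g (W j) + 1 ≤ g (W (j + 1)))
    (hdeficit : t < b → D ≤ g (W t) + #{y ∈ C \ W t | s y ≤ τ}) :
    #{y ∈ C | τ < s y} ≤ 2 * #{y ∈ W b | τ < s y} := by
  have h₁ := run.add_mul_card_filter_le hg _ (Nat.zero_le t) ht hbefore
  have h₂ := run.add_mul_card_filter_le hg _ ht le_rfl hafter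
  have hpicks : #{j ∈ range b | τ < s (x j)} + #{j ∈ Ico 0 t | s (x j) ≤ τ}
      + #{j ∈ Ico t b | s (x j) ≤ τ} = b := by
    have hlow : #{j ∈ Ico 0 t | s (x j) ≤ τ} + #{j ∈ Ico t b | s (x j) ≤ τ}
        = #{j ∈ range b | ¬τ < s (x j)} := by
      simp only [card_filter, not_lt]
      rw [sum_Ico_consecutive _ (Nat.zero_le t) ht, range_eq_Ico]
    rw [add_assoc, hlow, card_filter_add_card_filter_not, card_range]
  have hC : #{y ∈ C | τ < s y} + #{y ∈ C \ W t | s y ≤ τ} ≤ #C := by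
    rw [← card_filter_add_card_filter_not (s := C) (fun y => τ < s y)]
    simp only [not_lt]
    exact Nat.add_le_add_left (card_le_card (filter_subset_filter _ sdiff_subset)) _
  have hgWb := hgD (W b)
  have hlate : #{j ∈ Ico t b | s (x j) ≤ τ} ≤ #{y ∈ C \ W t | s y ≤ τ} := by
    rcases ht.lt_or_eq with hlt | rfl
    · have := hdeficit hlt
      omega
    · simp
  rw [run.card_filter_eq]
  omega

theorem card_filter_lt_le (hC : Covers g D C) (τ : ℕ) :
    #{y ∈ C | τ < s y} ≤ 2 * #{y ∈ W b | τ < s y} := by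
  by_cases hpicked : ∀ y ∈ C, τ < s y → y ∈ W b
  · have hsub : {y ∈ C | τ < s y} ⊆ {y ∈ W b | τ < s y} := fun y hy => by
      simp only [mem_filter] at hy ⊢
      exact ⟨hpicked y hy.1 hy.2, hy.2⟩
    have := card_le_card hsub
    omega
  push Not at hpicked
  obtain ⟨y₀, -, hy₀, hy₀W⟩ := hpicked
  have hlow : ∀ j < b, s (x j) ≤ τ → g (W j) + 1 ≤ g (W (j + 1)) := fun j hj hxj =>
    run.apply_lt_succ hg hj (fun h => hy₀W (run.subset_of_le hj.le le_rfl h)) (by omega)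
  -- `t` is the first low pick of unit gain, or `b` if there is none
  have hex : ∃ t, b ≤ t ∨ (s (x t) ≤ τ ∧ g (W (t + 1)) ≤ g (W t) + 1) :=
    ⟨b, Or.inl le_rfl⟩
  have ht : Nat.find hex ≤ b := Nat.find_min' hex (Or.inl le_rfl)
  refine run.card_filter_lt_le_of_split hg hgD hDb hCb ht (fun j hj hxj => ?_)
    (fun j hj hxj => hlow j (mem_Ico.1 hj).2 hxj) (fun htb => ?_)
  · have := Nat.find_min hex (mem_Ico.1 hj).2
    have := hlow j (by omega) hxj
    omega
  · obtain hbt | ⟨hxt, hunit⟩ := Nat.find_spec hex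
    · omega
    · exact run.le_add_card_filter hC htb hxt hunit

theorem sum_le_two_mul (hC : Covers g D C) : ∑ y ∈ C, s y ≤ 2 * ∑ y ∈ W b, s y := by
  have hT : ∀ y ∈ C ∪ W b, s y ≤ (C ∪ W b).sup s := fun y hy => le_sup hy
  rw [sum_eq_sum_range_card_filter_lt C s fun y hy => hT y (mem_union_left _ hy),
    sum_eq_sum_range_card_filter_lt (W b) s fun y hy => hT y (mem_union_right _ hy), mul_sum]
  exact sum_le_sum fun τ _ => run.card_filter_lt_le hg hgD hDb hCb hC τ

end IsGreedyRun

end Greedy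

section Coverage

variable {P : Type*} [DecidableEq P] {C : Finset P}
variable {ι : Type*} [Fintype ι]

def coverage (A : ι → Finset P) (m : ι → ℕ) (X : Finset P) : ℕ :=
  ∑ i, min (m i) #(X ∩ A i)

variable {A : ι → Finset P} {m : ι → ℕ}

theorem coverage_mono : Monotone (coverage A m) := fun _ _ hXY =>
  sum_le_sum fun _ _ => min_le_min_left _ (card_le_card (inter_subset_inter_right hXY))

theorem coverage_le (X : Finset P) : coverage A m X ≤ ∑ i, m i :=
  sum_le_sum fun _ _ => min_le_left _ _

theorem le_card_inter_of_sum_le_coverage {X : Finset P} (h : ∑ i, m i ≤ coverage A m X)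
    (i : ι) : m i ≤ #(X ∩ A i) := by
  have heq := (sum_eq_sum_iff_of_le fun i _ => min_le_left (m i) #(X ∩ A i)).1
    (le_antisymm (coverage_le X) h) i (mem_univ i)
  exact min_eq_left_iff.1 heq

theorem covers_coverage (h : ∀ i, m i ≤ #(C ∩ A i)) : Covers (coverage A m) (∑ i, m i) C :=
  Covers.sum univ (fun _ _ _ _ hXY => min_le_min_left _
    (card_le_card (inter_subset_inter_right hXY))) fun i _ => covers_min_card (h i)

end Coverage

section Unanimous

variable {P : Type*} [Fintype P] {u : P → ℕ} {n : ℕ}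

def approvers (u : P → ℕ) : Finset P := {x | u x ≠ 0}

variable (hu : ∀ x, u x = 0 ∨ u x = n)
include hu

theorem pos_of_mem_approvers {x : P} (hx : x ∈ approvers u) : 0 < n := by
  rw [approvers, mem_filter] at hx
  rcases hu x with h | h <;> omega

variable [DecidableEq P]

theorem apply_eq_ite_mem_approvers (x : P) : u x = if x ∈ approvers u then n else 0 := by
  rcases hu x with h | h <;> by_cases hn : n = 0 <;> simp [approvers, h, hn]

theorem sum_eq_mul_card_inter_approvers (X : Finset P) :
    ∑ x ∈ X, u x = n * #(X ∩ approvers u) := by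
  rw [sum_congr rfl fun x _ => apply_eq_ite_mem_approvers hu x, sum_ite_mem, sum_const,
    smul_eq_mul, mul_comm]

theorem mul_le_sum_iff {c : ℕ} (hc : c ≤ #(approvers u)) (X : Finset P) :
    n * c ≤ ∑ x ∈ X, u x ↔ c ≤ #(X ∩ approvers u) := by
  rw [sum_eq_mul_card_inter_approvers hu]
  rcases (approvers u).eq_empty_or_nonempty with h | ⟨y, hy⟩
  · simp_all
  · exact Nat.mul_le_mul_left_iff (pos_of_mem_approvers hu hy)

theorem isGreatest_sum_of_card_le (c : ℕ) :
    IsGreatest {v | ∃ B : Finset P, #B ≤ c ∧ v = ∑ x ∈ B, u x}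
      (n * min c #(approvers u)) := by
  refine ⟨?_, ?_⟩
  · obtain ⟨B, hB, hBc⟩ := exists_subset_card_eq (min_le_right c #(approvers u))
    refine ⟨B, hBc ▸ min_le_left _ _, ?_⟩
    rw [sum_eq_mul_card_inter_approvers hu, inter_eq_left.2 hB, hBc]
  · rintro v ⟨B, hB, rfl⟩
    rw [sum_eq_mul_card_inter_approvers hu]
    exact Nat.mul_le_mul_left _
      (le_min ((card_le_card inter_subset_left).trans hB) (card_le_card inter_subset_right))

theorem sum_cast_eq_mul_card_inter_approvers (X : Finset P) :
    ∑ x ∈ X, (u x : ℝ) = n * #(X ∩ approvers u) := by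
  exact_mod_cast sum_eq_mul_card_inter_approvers hu X

theorem sum_mul_apply_eq_mul_sum_approvers (p : P → ℝ) :
    ∑ x, p x * u x = n * ∑ x ∈ approvers u, p x := by
  simp_rw [apply_eq_ite_mem_approvers hu]
  simp [mul_ite, sum_ite_mem, sum_mul, mul_comm]

end Unanimous

section Residual

variable {P : Type*} [Fintype P] [DecidableEq P] {u : P → ℕ} {n c : ℕ} {W : Finset P}
variable (hu : ∀ x, u x = 0 ∨ u x = n) (hc : c ≤ #(approvers u))
include hu hc

theorem cast_sub_card_inter_le_sum_of_fracFeasible {p : P → ℝ}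
    (hp : FracFeasible u (n * c) W p) :
    ((c - #(W ∩ approvers u) : ℕ) : ℝ) ≤ ∑ x, p x := by
  obtain ⟨hp01, -, hwelfare⟩ := hp
  have hsum_nonneg : 0 ≤ ∑ x, p x := sum_nonneg fun x _ => (hp01 x).1
  have hc_le : (c : ℝ) ≤ #(W ∩ approvers u) + ∑ x, p x := by
    rcases (approvers u).eq_empty_or_nonempty with h | ⟨y, hy⟩
    · rw [h, card_empty] at hc
      rw [Nat.le_zero.1 hc, Nat.cast_zero]
      positivity
    have happ : ∑ x ∈ approvers u, p x ≤ ∑ x, p x :=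
      sum_le_sum_of_subset_of_nonneg (subset_univ _) fun x _ _ => (hp01 x).1
    rw [sum_cast_eq_mul_card_inter_approvers hu, sum_mul_apply_eq_mul_sum_approvers hu,
      Nat.cast_mul] at hwelfare
    have hn : (0 : ℝ) < n := by exact_mod_cast pos_of_mem_approvers hu hy
    have : (c : ℝ) ≤ #(W ∩ approvers u) + ∑ x ∈ approvers u, p x :=
      le_of_mul_le_mul_left (by linarith) hn
    linarith
  rcases le_total #(W ∩ approvers u) c with h | h
  · rw [Nat.cast_sub h]
    linarith
  · rw [Nat.sub_eq_zero_of_le h, Nat.cast_zero]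
    exact hsum_nonneg

theorem exists_fracFeasible_sum_eq :
    ∃ p, FracFeasible u (n * c) W p ∧
      ∑ x, p x = ((c - #(W ∩ approvers u) : ℕ) : ℝ) := by
  have hmissing : c - #(W ∩ approvers u) ≤ #(approvers u \ W) := by
    have := card_sdiff_add_card_inter (approvers u) W
    rw [inter_comm] at this
    omega
  obtain ⟨B, hB, hBcard⟩ := exists_subset_card_eq hmissing
  have hBA : B ⊆ approvers u := hB.trans sdiff_subset
  refine ⟨fun x => if x ∈ B then 1 else 0,
    ⟨fun x => by dsimp only; split_ifs <;> norm_num,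
      fun x hx => if_neg fun hxB => (mem_sdiff.1 (hB hxB)).2 hx, ?_⟩,
    by simp [hBcard]⟩
  have hcover : c ≤ #(W ∩ approvers u) + #B := by omega
  rw [sum_cast_eq_mul_card_inter_approvers hu, sum_mul_apply_eq_mul_sum_approvers hu, sum_boole,
    filter_mem_eq_inter, inter_eq_right.2 hBA, ← mul_add]
  exact_mod_cast Nat.mul_le_mul_left n hcover

theorem resid_eq_sub_card_inter : resid u (n * c) W = ((c - #(W ∩ approvers u) : ℕ) : ℝ) := by
  obtain ⟨p, hp, hpsum⟩ := exists_fracFeasible_sum_eq hu hc (W := W)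
  refine IsLeast.csInf_eq ⟨⟨p, hp, hpsum⟩, ?_⟩
  rintro r ⟨q, hq, rfl⟩
  exact cast_sub_card_inter_le_sum_of_fracFeasible hu hc hq

end Residual

theorem coverTot_eq {P : Type*} [Fintype P] [DecidableEq P] {k : ℕ} {sw : Fin k → P → ℕ}
    {size : Fin k → ℕ} (hun : ∀ i x, sw i x = 0 ∨ sw i x = size i) {m : Fin k → ℕ}
    (hm : ∀ i, m i ≤ #(approvers (sw i))) (bd : Fin k → ℕ) (X : Finset P) :
    coverTot sw (fun i => size i * m i) bd X
      = ∑ i, ((bd i : ℝ) - m i) + coverage (fun i => approvers (sw i)) m X := by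
  rw [coverTot, coverage, Nat.cast_sum, ← sum_add_distrib]
  refine sum_congr rfl fun i _ => ?_
  rw [resid_eq_sub_card_inter (hun i) (hm i), ← Nat.sub_sub_eq_min,
    Nat.cast_sub (Nat.sub_le _ _)]
  ring

theorem unanimous_greedy_half_approx_general
    {P : Type*} [Fintype P] [DecidableEq P] {k : ℕ}
    (sw : Fin k → P → ℕ) (size : Fin k → ℕ)
    (hun : ∀ i x, sw i x = 0 ∨ sw i x = size i)
    (bd : Fin k → ℕ) (b : ℕ) (hb : ∑ i, bd i = b)
    (f : Fin k → ℕ)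
    (hf : ∀ i, IsGreatest
      {v | ∃ A : Finset P, A.card ≤ bd i ∧ v = ∑ x ∈ A, sw i x} (f i))
    (Wseq : ℕ → Finset P) (xseq : ℕ → P)
    (hW0 : Wseq 0 = ∅)
    (hstep : ∀ j < b, Wseq (j + 1) = insert (xseq j) (Wseq j))
    (hnew : ∀ j < b, xseq j ∉ Wseq j)
    (hgreedy : ∀ j < b, ∀ y ∉ Wseq j,
      coverTot sw f bd (insert y (Wseq j)) ≤
        coverTot sw f bd (insert (xseq j) (Wseq j)))
    (htie : ∀ j < b, ∀ y ∉ Wseq j,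
      coverTot sw f bd (insert y (Wseq j)) =
        coverTot sw f bd (insert (xseq j) (Wseq j)) →
      (∑ i, sw i y) ≤ ∑ i, sw i (xseq j)) :
    (∀ i, f i ≤ ∑ x ∈ Wseq b, sw i x) ∧
    (Wseq b).card ≤ b ∧
    (∀ Wstar : Finset P, Wstar.card ≤ b →
      (∀ i, f i ≤ ∑ x ∈ Wstar, sw i x) →
      ∑ i, ∑ x ∈ Wstar, sw i x ≤ 2 * ∑ i, ∑ x ∈ Wseq b, sw i x) := by
  set A : Fin k → Finset P := fun i => approvers (sw i)
  set m : Fin k → ℕ := fun i => min (bd i) #(A i)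
  have hmA : ∀ i, m i ≤ #(A i) := fun i => min_le_right _ _
  obtain rfl : f = fun i => size i * m i :=
    funext fun i => (hf i).unique (isGreatest_sum_of_card_le (hun i) (bd i))
  have hfair : ∀ i X, size i * m i ≤ ∑ x ∈ X, sw i x ↔ m i ≤ #(X ∩ A i) :=
    fun i => mul_le_sum_iff (hun i) (hmA i)
  have hcov := coverTot_eq hun hmA bd
  have run : IsGreedyRun (coverage A m) (fun y => ∑ i, sw i y) b Wseq xseq :=
    { zero := hW0, succ := hstep, notMem := hnew
      max_gain := fun j hj y hy => by
        have h := hgreedy j hj y hy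
        rw [hcov, hcov] at h
        exact_mod_cast le_of_add_le_add_left h
      tie := fun j hj y hy h => htie j hj y hy (by rw [hcov, hcov, h]) }
  have hDb : ∑ i, m i ≤ b := hb ▸ sum_le_sum fun i _ => min_le_left _ _
  refine ⟨fun i => ?_, run.card_le, fun C hCb hCfair => ?_⟩
  · have hfull := run.le_apply_of_covers coverage_mono
      (covers_coverage fun i => by rw [univ_inter]; exact hmA i) hDb
    exact (hfair i _).2 (le_card_inter_of_sum_le_coverage hfull i)
  · rw [sum_comm, sum_comm (s := univ)]
    exact run.sum_le_two_mul coverage_mono coverage_le hDb hCb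
      (covers_coverage fun i => (hfair i C).1 (hCfair i))

/-- the Unanimous Greedy Algorithm, which for `b` rounds adds an
unchosen project of maximum conditional coverage (breaking ties by maximum
total welfare), returns a district-fair budget-feasible outcome whose social
welfare is at least half of that of any district-fair budget-feasible
outcome.  Here all projects have unit cost and districts are unanimous:
`sw i x ∈ {0, size i}`. -/
theorem unanimous_greedy_half_approx
    {P : Type*} [Fintype P] [DecidableEq P] {k : ℕ}
    (sw : Fin k → P → ℕ) (size : Fin k → ℕ)
    (hun : ∀ i x, sw i x = 0 ∨ sw i x = size i)
    (bd : Fin k → ℕ) (b : ℕ) (hb : ∑ i, bd i = b)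
    (henough : b ≤ Fintype.card P)
    (f : Fin k → ℕ)
    (hf : ∀ i, IsGreatest
      {v | ∃ A : Finset P, A.card ≤ bd i ∧ v = ∑ x ∈ A, sw i x} (f i))
    (Wseq : ℕ → Finset P) (xseq : ℕ → P)
    (hW0 : Wseq 0 = ∅)
    (hstep : ∀ j < b, Wseq (j + 1) = insert (xseq j) (Wseq j))
    (hnew : ∀ j < b, xseq j ∉ Wseq j)
    (hgreedy : ∀ j < b, ∀ y ∉ Wseq j,
      coverTot sw f bd (insert y (Wseq j)) ≤
        coverTot sw f bd (insert (xseq j) (Wseq j)))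
    (htie : ∀ j < b, ∀ y ∉ Wseq j,
      coverTot sw f bd (insert y (Wseq j)) =
        coverTot sw f bd (insert (xseq j) (Wseq j)) →
      (∑ i, sw i y) ≤ ∑ i, sw i (xseq j)) :
    (∀ i, f i ≤ ∑ x ∈ Wseq b, sw i x) ∧
    (Wseq b).card ≤ b ∧
    (∀ Wstar : Finset P, Wstar.card ≤ b →
      (∀ i, f i ≤ ∑ x ∈ Wstar, sw i x) →
      ∑ i, ∑ x ∈ Wstar, sw i x ≤ 2 * ∑ i, ∑ x ∈ Wseq b, sw i x) :=
  unanimous_greedy_half_approx_general sw size hun bd b hb f hf Wseq xseq hW0 hstep hnew hgreedy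
    htie
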